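/- arXiv:2312.06656 — 4 statements merged into one kernel-verified Lean document; each statement's English description precedes it below -/
import Mathlib

section
/- Let ρ : ℂ → ℝ be positive and 1-Lipschitz, let r > 0, and let {a_j}_{j≥1} ⊂ ℂ be a sequence such that the disks D(a_j, (r/2)·ρ(a_j)) cover ℂ. Assume there are N ∈ ℕ with the property that every z ∈ ℂ belongs to at most N of the disks D(a_j, r·ρ(a_j)), and Λ ≥ 1 such that ρ(a_k) ≤ Λ·ρ(a_j) whenever D(a_j, r·ρ(a_j)) ∩ D(a_k, r·ρ(a_k)) ≠ ∅. Then there exist C^∞ functions ψ_j : ℂ → [0,1] such that: supp ψ_j ⊆ D(a_j, r·ρ(a_j)) for every j; Σ_j ψ_j(z) = 1 for every z ∈ ℂ; and r·ρ(a_j)·|∂̄ψ_j(z)| ≤ C for all j and all z ∈ ℂ, where C depends only on N and Λ (in particular C is independent of r, j and the points a_j). -/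
/-!
Fix one smooth bump and rescale it to `χ_j`, equal to `1` on `D(a_j, rρ(a_j)/2)` and supported in
`D(a_j, 3rρ(a_j)/4)`; then `rρ(a_j)·|∇χ_j| ≤ K` for an absolute `K`. Put `ψ_j = χ_j / Σ_k χ_k`.
The covering gives `Σ_k χ_k ≥ 1`, and the sum is locally finite: near a point `w` of
`D(a_m, rρ(a_m)/2)`, every support that comes close to `w` belongs to a disk meeting
`D(a_m, rρ(a_m))`, hence of radius at least `rρ(a_m)/Λ`, and the margin between `3/4` and `1`
forces `w` into that disk. Finally `|∇ψ_j| ≤ |∇χ_j| + Σ_k |∇χ_k|`; at a point of `D(a_j, rρ(a_j))`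
at most `N` of the `χ_k` are nonzero, and each of their disks has radius at least `rρ(a_j)/Λ`,
so `rρ(a_j)·|∂̄ψ_j| ≤ K(1 + ΛN)`.
-/

open MeasureTheory Metric Complex ENNReal Set

noncomputable section

/-- The Wirtinger derivative `∂̄u = (1/2)(∂u/∂x + i ∂u/∂y)`. -/
def dbar (u : ℂ → ℂ) (z : ℂ) : ℂ :=
  (1 / 2 : ℂ) * (fderiv ℝ u z 1 + Complex.I * fderiv ℝ u z Complex.I)

open Function

theorem norm_dbar_le (u : ℂ → ℂ) (z : ℂ) : ‖dbar u z‖ ≤ ‖fderiv ℝ u z‖ := by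
  set D := fderiv ℝ u z
  calc ‖dbar u z‖ ≤ 1 / 2 * (‖D 1‖ + ‖D I‖) := by
        rw [dbar, norm_mul, norm_div, norm_one, RCLike.norm_ofNat]
        gcongr
        exact (norm_add_le _ _).trans_eq (by rw [norm_mul, norm_I, one_mul])
    _ ≤ 1 / 2 * (‖D‖ * ‖(1 : ℂ)‖ + ‖D‖ * ‖I‖) := by gcongr <;> exact D.le_opNorm _
    _ = ‖D‖ := by rw [norm_one, norm_I]; ring

theorem norm_dbar_ofReal_le {f : ℂ → ℝ} {z : ℂ} (hf : DifferentiableAt ℝ f z) :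
    ‖dbar (fun w => (f w : ℂ)) z‖ ≤ ‖fderiv ℝ f z‖ := by
  refine (norm_dbar_le _ z).trans ?_
  rw [show (fun w => (f w : ℂ)) = ofRealCLM ∘ f from rfl,
    (ofRealCLM.hasFDerivAt.comp z hf.hasFDerivAt).fderiv]
  exact (ofRealCLM.opNorm_comp_le _).trans_eq (by rw [ofRealCLM_norm, one_mul])

theorem fderiv_eq_zero_of_nonneg_of_eq_zero {E : Type*} [NormedAddCommGroup E] [NormedSpace ℝ E]
    {f : E → ℝ} (hf : ∀ y, 0 ≤ f y) {x : E} (hx : f x = 0) : fderiv ℝ f x = 0 :=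
  IsLocalMin.fderiv_eq_zero <| Filter.Eventually.of_forall fun y => hx ▸ hf y

section LocallyFinite

variable {ι 𝕜 E F : Type*} [NontriviallyNormedField 𝕜] [NormedAddCommGroup E] [NormedSpace 𝕜 E]
  [NormedAddCommGroup F] [NormedSpace 𝕜 F] {f : ι → E → F}

theorem norm_finsum_le (g : ι → F) : ‖∑ᶠ i, g i‖ ≤ ∑ᶠ i, ‖g i‖ := by
  by_cases hg : (support g).Finite
  · rw [finsum_eq_sum_of_support_subset g hg.coe_toFinset.ge,
      finsum_eq_sum_of_support_subset (‖g ·‖) fun i hi => hg.mem_toFinset.2 (by simpa using hi)]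
    exact norm_sum_le _ _
  · rw [finsum_of_infinite_support hg, norm_zero]
    exact finsum_nonneg fun i => norm_nonneg _

theorem LocallyFinite.hasFDerivAt_finsum (hf : LocallyFinite fun i => support (f i)) {x : E}
    (hd : ∀ i, DifferentiableAt 𝕜 (f i) x) :
    HasFDerivAt (fun y => ∑ᶠ i, f i y) (∑ᶠ i, fderiv 𝕜 (f i) x) x := by
  obtain ⟨I, hI⟩ := hf.exists_finset_support x
  have hvanish : ∀ i ∉ I, f i =ᶠ[nhds x] fun _ => 0 := fun i hi =>
    hI.mono fun y hy => by_contra fun h => hi (hy h)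
  rw [finsum_eq_sum_of_support_subset _ fun i hi => by_contra fun h =>
    hi (by rw [(hvanish i h).fderiv_eq, fderiv_const_apply])]
  refine (HasFDerivAt.sum fun i _ => (hd i).hasFDerivAt).congr_of_eventuallyEq ?_
  filter_upwards [hI] with y hy
  simpa using finsum_eq_sum_of_support_subset _ hy

theorem LocallyFinite.contDiff_finsum {n : WithTop ℕ∞} (hf : LocallyFinite fun i => support (f i))
    (hc : ∀ i, ContDiff 𝕜 n (f i)) : ContDiff 𝕜 n fun y => ∑ᶠ i, f i y :=
  contMDiff_iff_contDiff.1 (contMDiff_finsum (fun i => (hc i).contMDiff) hf)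

end LocallyFinite

section Normalize

variable {ι X : Type*} {χ : ι → X → ℝ}

def normalizeFamily (χ : ι → X → ℝ) (i : ι) (x : X) : ℝ := χ i x / ∑ᶠ k, χ k x

theorem support_normalizeFamily_subset (i : ι) : support (normalizeFamily χ i) ⊆ support (χ i) :=
  fun x hx h => hx (by rw [normalizeFamily, h, zero_div])

variable [TopologicalSpace X]

theorem LocallyFinite.le_finsum (hlf : LocallyFinite fun i => support (χ i))
    (h0 : ∀ i x, 0 ≤ χ i x) (i : ι) (x : X) : χ i x ≤ ∑ᶠ k, χ k x :=
  single_le_finsum i (hlf.point_finite x) (h0 · x)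

theorem tsum_normalizeFamily (hlf : LocallyFinite fun i => support (χ i))
    (hsum : ∀ x, 1 ≤ ∑ᶠ k, χ k x) (x : X) : ∑' i, normalizeFamily χ i x = 1 := by
  rw [tsum_eq_finsum ((hlf.point_finite x).subset fun i => (support_normalizeFamily_subset i ·))]
  simp only [normalizeFamily, div_eq_mul_inv, ← finsum_mul]
  exact mul_inv_cancel₀ (one_pos.trans_le (hsum x)).ne'

theorem normalizeFamily_mem_Icc (hlf : LocallyFinite fun i => support (χ i))
    (h0 : ∀ i x, 0 ≤ χ i x) (hsum : ∀ x, 1 ≤ ∑ᶠ k, χ k x) (i : ι) (x : X) :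
    normalizeFamily χ i x ∈ Icc 0 1 :=
  have hpos : 0 < ∑ᶠ k, χ k x := one_pos.trans_le (hsum x)
  ⟨div_nonneg (h0 i x) hpos.le, (div_le_one hpos).2 (hlf.le_finsum h0 i x)⟩

end Normalize

section NormalizeSmooth

variable {ι E : Type*} [NormedAddCommGroup E] [NormedSpace ℝ E] {χ : ι → E → ℝ}

theorem contDiff_normalizeFamily {n : WithTop ℕ∞} (hlf : LocallyFinite fun i => support (χ i))
    (hsum : ∀ x, 1 ≤ ∑ᶠ k, χ k x) (hc : ∀ i, ContDiff ℝ n (χ i)) (i : ι) :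
    ContDiff ℝ n (normalizeFamily χ i) :=
  (hc i).div (hlf.contDiff_finsum hc) fun x => (one_pos.trans_le (hsum x)).ne'

theorem norm_fderiv_normalizeFamily_le (hlf : LocallyFinite fun i => support (χ i))
    (h0 : ∀ i x, 0 ≤ χ i x) (hsum : ∀ x, 1 ≤ ∑ᶠ k, χ k x) (hd : ∀ i, Differentiable ℝ (χ i))
    (i : ι) (x : E) :
    ‖fderiv ℝ (normalizeFamily χ i) x‖ ≤ ‖fderiv ℝ (χ i) x‖ + ∑ᶠ k, ‖fderiv ℝ (χ k) x‖ := by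
  set S := fun y => ∑ᶠ k, χ k y
  set S' := ∑ᶠ k, fderiv ℝ (χ k) x
  have hSx : 1 ≤ S x := hsum x
  have hinv : HasFDerivAt (fun y => (S y)⁻¹) ((-(S x ^ 2)⁻¹) • S') x :=
    (hasDerivAt_inv (by positivity)).comp_hasFDerivAt x (hlf.hasFDerivAt_finsum fun k => hd k x)
  have hψ : HasFDerivAt (normalizeFamily χ i)
      (χ i x • (-(S x ^ 2)⁻¹) • S' + (S x)⁻¹ • fderiv ℝ (χ i) x) x := by
    rw [show normalizeFamily χ i = fun y => χ i y * (S y)⁻¹ from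
      funext fun y => div_eq_mul_inv _ _]
    exact (hd i x).hasFDerivAt.mul hinv
  have hχS : χ i x ≤ S x ^ 2 := (hlf.le_finsum h0 i x).trans (by nlinarith)
  rw [hψ.fderiv]
  calc _ ≤ χ i x * (S x ^ 2)⁻¹ * ‖S'‖ + (S x)⁻¹ * ‖fderiv ℝ (χ i) x‖ := by
        refine (norm_add_le _ _).trans_eq ?_
        rw [norm_smul, norm_smul, norm_smul, norm_neg, Real.norm_of_nonneg (h0 i x),
          Real.norm_of_nonneg (by positivity), Real.norm_of_nonneg (by positivity), mul_assoc]
    _ ≤ 1 * ‖S'‖ + 1 * ‖fderiv ℝ (χ i) x‖ := by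
        gcongr
        · exact mul_inv_le_one_of_le₀ hχS (by positivity)
        · exact inv_le_one_of_one_le₀ hSx
    _ ≤ _ := by linarith [norm_finsum_le fun k => fderiv ℝ (χ k) x]

end NormalizeSmooth

section Bump

variable {E : Type*} [NormedAddCommGroup E] [NormedSpace ℝ E] [FiniteDimensional ℝ E]

theorem ContDiffBump.exists_rIn_mul_norm_fderiv_le {q : ℝ} (hq : 1 < q) :
    ∃ K, 0 ≤ K ∧ ∀ (c : E) (f : ContDiffBump c), f.rOut / f.rIn = q →
      ∀ x, f.rIn * ‖fderiv ℝ f x‖ ≤ K := by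
  let f₀ : ContDiffBump (0 : E) := ⟨1, q, one_pos, hq⟩
  obtain ⟨K, hK⟩ := ((f₀.contDiff (n := 1)).continuous_fderiv one_ne_zero)
    |>.bounded_above_of_compact_support (f₀.hasCompactSupport.fderiv (𝕜 := ℝ))
  refine ⟨K, (norm_nonneg _).trans (hK 0), fun c f hf x => ?_⟩
  have hscale : ⇑f = fun y => f₀ (f.rIn⁻¹ • (y - c)) := by
    funext y
    simp [ContDiffBump.apply, f₀, hf]
  rw [hscale, fderiv_comp_sub (f := fun y => f₀ (f.rIn⁻¹ • y)), fderiv_comp_smul, norm_smul,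
    Real.norm_of_nonneg (inv_nonneg.2 f.rIn_pos.le), mul_inv_cancel_left₀ f.rIn_pos.ne']
  exact hK _

def halfBump (c : E) {R : ℝ} (hR : 0 < R) : ContDiffBump c :=
  ⟨R / 2, 3 / 4 * R, half_pos hR, by linarith⟩

theorem support_halfBump (c : E) {R : ℝ} (hR : 0 < R) :
    support (halfBump c hR) = ball c (3 / 4 * R) :=
  ContDiffBump.support_eq _

theorem exists_mul_norm_fderiv_halfBump_le :
    ∃ K, 0 ≤ K ∧ ∀ (c : E) {R : ℝ} (hR : 0 < R) x, R * ‖fderiv ℝ (halfBump c hR) x‖ ≤ K := by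
  obtain ⟨K, hK0, hK⟩ :=
    ContDiffBump.exists_rIn_mul_norm_fderiv_le (E := E) (q := 3 / 2) (by norm_num)
  refine ⟨2 * K, by positivity, fun c R hR x => ?_⟩
  have h := hK c (halfBump c hR) (by simp only [halfBump]; field_simp; norm_num) x
  change R / 2 * _ ≤ K at h
  linarith

end Bump

theorem locallyFinite_ball_mul_of_comparable {X ι : Type*} [PseudoMetricSpace X] {a : ι → X}
    {R : ι → ℝ} {Λ s : ℝ} (hs : s < 1) (hR : ∀ i, 0 ≤ R i)
    (hcover : ∀ x, ∃ i, x ∈ ball (a i) (R i / 2))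
    (hcomp : ∀ i j, (ball (a i) (R i) ∩ ball (a j) (R j)).Nonempty → R j ≤ Λ * R i)
    (hfin : ∀ x, {i | x ∈ ball (a i) (R i)}.Finite) :
    LocallyFinite fun i => ball (a i) (s * R i) := by
  intro w
  obtain ⟨m, hwm⟩ := hcover w
  have hdist := mem_ball.1 hwm
  have hRm : 0 < R m := by linarith [dist_nonneg (x := w) (y := a m)]
  have hΛ : 1 ≤ Λ := by
    have := hcomp m m ⟨w, ball_subset_ball (by linarith) hwm, ball_subset_ball (by linarith) hwm⟩
    nlinarith
  set ε := min (R m / 2 - dist w (a m)) ((1 - s) * R m / Λ)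
  have hε : 0 < ε := lt_min (by linarith) (div_pos (mul_pos (by linarith) hRm) (by linarith))
  refine ⟨ball w ε, ball_mem_nhds w hε, (hfin w).subset ?_⟩
  rintro i ⟨z, hzi, hzw⟩
  have hzm : z ∈ ball (a m) (R m) := by
    rw [mem_ball] at hzw ⊢
    linarith [dist_triangle z w (a m), min_le_left (R m / 2 - dist w (a m)) ((1 - s) * R m / Λ)]
  have hmi : R m ≤ Λ * R i :=
    hcomp i m ⟨z, ball_subset_ball (by nlinarith [hR i]) hzi, hzm⟩
  have hεi : ε ≤ (1 - s) * R i := by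
    refine (min_le_right _ _).trans ((div_le_iff₀ (by linarith)).2 ?_)
    nlinarith
  calc dist w (a i) ≤ dist z w + dist z (a i) := dist_triangle_left _ _ _
    _ < ε + s * R i := add_lt_add hzw hzi
    _ ≤ R i := by linarith

section Covering

variable {ι E : Type*} [NormedAddCommGroup E] [NormedSpace ℝ E] [FiniteDimensional ℝ E]
  {a : ι → E} {R : ι → ℝ} (hR : ∀ i, 0 < R i) {Λ K : ℝ} {N : ℕ}

theorem locallyFinite_support_halfBump (hcover : ∀ x, ∃ i, x ∈ ball (a i) (R i / 2))
    (hcomp : ∀ i j, (ball (a i) (R i) ∩ ball (a j) (R j)).Nonempty → R j ≤ Λ * R i)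
    (hfin : ∀ x, {i | x ∈ ball (a i) (R i)}.Finite) :
    LocallyFinite fun i => support (halfBump (a i) (hR i)) := by
  simpa only [support_halfBump] using
    locallyFinite_ball_mul_of_comparable (by norm_num) (fun i => (hR i).le) hcover hcomp hfin

theorem one_le_finsum_halfBump (hlf : LocallyFinite fun i => support (halfBump (a i) (hR i)))
    (hcover : ∀ x, ∃ i, x ∈ ball (a i) (R i / 2)) (x : E) :
    1 ≤ ∑ᶠ i, halfBump (a i) (hR i) x := by
  obtain ⟨i, hi⟩ := hcover x
  calc (1 : ℝ) = halfBump (a i) (hR i) x :=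
        (ContDiffBump.one_of_mem_closedBall _ (ball_subset_closedBall hi)).symm
    _ ≤ _ := hlf.le_finsum (fun i => (halfBump (a i) (hR i)).nonneg') i x

theorem mul_finsum_norm_fderiv_halfBump_le (hK0 : 0 ≤ K) (hΛ : 0 ≤ Λ)
    (hK : ∀ (c : E) {r : ℝ} (hr : 0 < r) x, r * ‖fderiv ℝ (halfBump c hr) x‖ ≤ K)
    (hcomp : ∀ i j, (ball (a i) (R i) ∩ ball (a j) (R j)).Nonempty → R j ≤ Λ * R i)
    (hfin : ∀ x, {i | x ∈ ball (a i) (R i)}.Finite)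
    (hN : ∀ x, {i | x ∈ ball (a i) (R i)}.ncard ≤ N) {j : ι} {x : E} (hx : x ∈ ball (a j) (R j)) :
    R j * ∑ᶠ k, ‖fderiv ℝ (halfBump (a k) (hR k)) x‖ ≤ N * (Λ * K) := by
  have hsupp : support (fun k => ‖fderiv ℝ (halfBump (a k) (hR k)) x‖) ⊆ (hfin x).toFinset := by
    intro k hk
    have hne : halfBump (a k) (hR k) x ≠ 0 := fun h =>
      hk (by simp [fderiv_eq_zero_of_nonneg_of_eq_zero (halfBump (a k) (hR k)).nonneg' h])
    rw [← mem_support, support_halfBump] at hne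
    simpa using ball_subset_ball (by linarith [hR k]) hne
  rw [finsum_eq_sum_of_support_subset _ hsupp, Finset.mul_sum]
  calc _ ≤ ∑ k ∈ (hfin x).toFinset, Λ * K := Finset.sum_le_sum fun k hk => by
        have hRjk : R j ≤ Λ * R k := hcomp k j ⟨x, by simpa using hk, hx⟩
        calc R j * _ ≤ Λ * (R k * ‖fderiv ℝ (halfBump (a k) (hR k)) x‖) := by
              rw [← mul_assoc]; gcongr
          _ ≤ Λ * K := by gcongr; exact hK _ _ _
    _ ≤ N * (Λ * K) := by
        rw [Finset.sum_const, nsmul_eq_mul, ← Set.ncard_eq_toFinset_card _ (hfin x)]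
        gcongr
        exact_mod_cast hN x

theorem mul_norm_fderiv_normalizeFamily_halfBump_le (hK0 : 0 ≤ K) (hΛ : 0 ≤ Λ)
    (hK : ∀ (c : E) {r : ℝ} (hr : 0 < r) x, r * ‖fderiv ℝ (halfBump c hr) x‖ ≤ K)
    (hcover : ∀ x, ∃ i, x ∈ ball (a i) (R i / 2))
    (hcomp : ∀ i j, (ball (a i) (R i) ∩ ball (a j) (R j)).Nonempty → R j ≤ Λ * R i)
    (hfin : ∀ x, {i | x ∈ ball (a i) (R i)}.Finite)
    (hN : ∀ x, {i | x ∈ ball (a i) (R i)}.ncard ≤ N) (j : ι) (x : E) :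
    R j * ‖fderiv ℝ (normalizeFamily (fun i => halfBump (a i) (hR i)) j) x‖ ≤ K * (1 + Λ * N) := by
  have hlf := locallyFinite_support_halfBump hR hcover hcomp hfin
  have h0 : ∀ i y, 0 ≤ halfBump (a i) (hR i) y := fun i => (halfBump (a i) (hR i)).nonneg'
  have hsum := one_le_finsum_halfBump hR hlf hcover
  by_cases hx : x ∈ ball (a j) (R j)
  · calc _ ≤ R j * (‖fderiv ℝ (halfBump (a j) (hR j)) x‖ +
          ∑ᶠ k, ‖fderiv ℝ (halfBump (a k) (hR k)) x‖) :=
          mul_le_mul_of_nonneg_left (norm_fderiv_normalizeFamily_le hlf h0 hsum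
            (fun i => ((halfBump (a i) (hR i)).contDiff (n := 1)).differentiable one_ne_zero) j x)
            (hR j).le
      _ ≤ K + N * (Λ * K) := by
          rw [mul_add]
          exact add_le_add (hK _ _ _)
            (mul_finsum_norm_fderiv_halfBump_le hR hK0 hΛ hK hcomp hfin hN hx)
      _ = K * (1 + Λ * N) := by ring
  · have hχ : halfBump (a j) (hR j) x = 0 :=
      ContDiffBump.zero_of_le_dist _ <| by
        simp only [halfBump]; linarith [not_lt.1 (mt mem_ball.2 hx), hR j]
    have hψ : normalizeFamily (fun i => halfBump (a i) (hR i)) j x = 0 := by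
      simp [normalizeFamily, hχ]
    rw [fderiv_eq_zero_of_nonneg_of_eq_zero
      (fun y => (normalizeFamily_mem_Icc hlf h0 hsum j y).1) hψ, norm_zero, mul_zero]
    positivity

end Covering

/-- smooth partition of unity subordinate to `{D(a_j, r·ρ(a_j))}`
with a uniform bound on `r·ρ(a_j)·|∂̄ψ_j|`. -/
theorem stmt4 (N : ℕ) (Λ : ℝ) (hΛ : 1 ≤ Λ) :
    ∃ C : ℝ, 0 < C ∧
      ∀ (ρ : ℂ → ℝ) (r : ℝ) (a : ℕ → ℂ),
        (∀ z, 0 < ρ z) → LipschitzWith 1 ρ → 0 < r →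
        (⋃ j, ball (a j) (r / 2 * ρ (a j))) = Set.univ →
        (∀ z : ℂ, ({j | z ∈ ball (a j) (r * ρ (a j))} : Set ℕ).Finite ∧
          ({j | z ∈ ball (a j) (r * ρ (a j))} : Set ℕ).ncard ≤ N) →
        (∀ j k : ℕ, (ball (a j) (r * ρ (a j)) ∩ ball (a k) (r * ρ (a k))).Nonempty →
          ρ (a k) ≤ Λ * ρ (a j)) →
        ∃ ψ : ℕ → ℂ → ℝ,
          (∀ j, ContDiff ℝ (⊤ : ℕ∞) (ψ j)) ∧
          (∀ j z, ψ j z ∈ Set.Icc (0 : ℝ) 1) ∧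
          (∀ j, Function.support (ψ j) ⊆ ball (a j) (r * ρ (a j))) ∧
          (∀ z : ℂ, ∑' j, ψ j z = 1) ∧
          (∀ (j : ℕ) (z : ℂ), r * ρ (a j) * ‖dbar (fun w => (ψ j w : ℂ)) z‖ ≤ C) := by
  obtain ⟨K, hK0, hK⟩ := exists_mul_norm_fderiv_halfBump_le (E := ℂ)
  have hΛ0 : 0 ≤ Λ := zero_le_one.trans hΛ
  refine ⟨K * (1 + Λ * N) + 1, by positivity, fun ρ r a hρ _ hr hcover hfin hcomp => ?_⟩
  set R : ℕ → ℝ := fun j => r * ρ (a j)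
  have hR : ∀ j, 0 < R j := fun j => mul_pos hr (hρ _)
  have hcover' : ∀ z, ∃ j, z ∈ ball (a j) (R j / 2) := fun z => by
    obtain ⟨j, hj⟩ := mem_iUnion.1 (eq_univ_iff_forall.1 hcover z)
    exact ⟨j, by simpa [R, div_mul_eq_mul_div] using hj⟩
  have hcomp' : ∀ j k, (ball (a j) (R j) ∩ ball (a k) (R k)).Nonempty → R k ≤ Λ * R j :=
    fun j k h => by simpa [R, mul_left_comm] using mul_le_mul_of_nonneg_left (hcomp j k h) hr.le
  have hlf := locallyFinite_support_halfBump hR hcover' hcomp' fun z => (hfin z).1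
  have hsum := one_le_finsum_halfBump hR hlf hcover'
  have hsmooth := contDiff_normalizeFamily (n := (⊤ : ℕ∞)) hlf hsum
    fun j => (halfBump (a j) (hR j)).contDiff
  refine ⟨normalizeFamily fun j => halfBump (a j) (hR j), hsmooth,
    normalizeFamily_mem_Icc hlf (fun j => (halfBump (a j) (hR j)).nonneg') hsum, fun j => ?_,
    tsum_normalizeFamily hlf hsum, fun j z => ?_⟩
  · exact (support_normalizeFamily_subset j).trans <|
      (support_halfBump (a j) (hR j)).trans_subset (ball_subset_ball (by linarith [hR j]))
  · calc r * ρ (a j) * ‖dbar _ z‖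
        ≤ R j * ‖fderiv ℝ (normalizeFamily (fun j => halfBump (a j) (hR j)) j) z‖ :=
          mul_le_mul_of_nonneg_left
            (norm_dbar_ofReal_le ((hsmooth j).differentiable (by simp) z)) (hR j).le
      _ ≤ K * (1 + Λ * N) := mul_norm_fderiv_normalizeFamily_halfBump_le hR hK0 hΛ0 hK hcover'
          hcomp' (fun z => (hfin z).1) (fun z => (hfin z).2) j z
      _ ≤ _ := by linarith
end
end

section
/- Let ρ : ℂ → ℝ be positive and 1-Lipschitz, let r > 0, and let {a_j}_{j≥1} ⊂ ℂ be a sequence such that the disks D(a_j, (r/5)·ρ(a_j)) are pairwise disjoint. Then for every m > 0 with m·r < 1 there exists an integer N, depending only on m and r, such that every point z ∈ ℂ belongs to at most N of the disks D(a_j, m·r·ρ(a_j)). If moreover the disks D(a_j, r·ρ(a_j)) cover ℂ and m ≥ 1, then every z ∈ ℂ belongs to at least one of the disks D(a_j, m·r·ρ(a_j)). -/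
open MeasureTheory Metric Complex ENNReal Set

noncomputable section

/-!
If `z ∈ D(a_j, m r ρ(a_j))` with `m r < 1`, the Lipschitz bound gives
`(1 - m r) ρ(a_j) ≤ ρ(z) ≤ (1 + m r) ρ(a_j)`. Hence the pairwise disjoint disks
`D(a_j, r ρ(a_j) / 5)` all have radius at least `r ρ(z) / (5 (1 + m r))` and lie in the disk
around `z` of radius `(1 + 5 m) r ρ(z) / (5 (1 - m r))`; comparing areas bounds their number by
`((1 + 5 m) (1 + m r) / (1 - m r))²`. The covering claim is monotonicity of disks in the radius.
-/

theorem Set.finite_and_ncard_le_of_forall_finset {α : Type*} {s : Set α} {N : ℕ}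
    (h : ∀ T : Finset α, ↑T ⊆ s → T.card ≤ N) : s.Finite ∧ s.ncard ≤ N := by
  have hfin : s.Finite := by
    by_contra hinf
    obtain ⟨T, hTs, hT⟩ := Set.Infinite.exists_subset_card_eq hinf (N + 1)
    have := h T hTs
    omega
  refine ⟨hfin, ?_⟩
  rw [ncard_eq_toFinset_card s hfin]
  exact h _ (by simp)

namespace LipschitzWith

variable {α : Type*} [PseudoMetricSpace α] {ρ : α → ℝ} {z w : α} {t : ℝ}

theorem le_one_add_mul_of_dist_le (hρ : LipschitzWith 1 ρ) (h : dist z w ≤ t * ρ w) :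
    ρ z ≤ (1 + t) * ρ w := by
  have := hρ.dist_le_mul z w
  rw [NNReal.coe_one, one_mul, Real.dist_eq] at this
  linarith [le_abs_self (ρ z - ρ w)]

theorem one_sub_mul_le_of_dist_le (hρ : LipschitzWith 1 ρ) (h : dist z w ≤ t * ρ w) :
    (1 - t) * ρ w ≤ ρ z := by
  have := hρ.dist_le_mul z w
  rw [NNReal.coe_one, one_mul, Real.dist_eq] at this
  linarith [neg_abs_le (ρ z - ρ w)]

end LipschitzWith

theorem card_le_div_pow_of_pairwiseDisjoint_ball {E ι : Type*} [NormedAddCommGroup E]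
    [NormedSpace ℝ E] [FiniteDimensional ℝ E] {T : Finset ι} {c : ι → E} {δ : ι → ℝ}
    {z : E} {s R : ℝ} (hs : 0 < s) (hR : 0 < R) (hδ : ∀ j ∈ T, s ≤ δ j)
    (hdisj : (T : Set ι).PairwiseDisjoint fun j => ball (c j) (δ j))
    (hsub : ∀ j ∈ T, ball (c j) (δ j) ⊆ ball z R) :
    (T.card : ℝ) ≤ (R / s) ^ Module.finrank ℝ E := by
  borelize E
  set μ : Measure E := Measure.addHaar
  set d := Module.finrank ℝ E
  have hsum : T.card • (ENNReal.ofReal (s ^ d) * μ (ball 0 1)) ≤ ∑ j ∈ T, μ (ball (c j) (δ j)) :=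
    T.card_nsmul_le_sum _ _ fun j hj => by
      rw [μ.addHaar_ball_of_pos _ (hs.trans_le (hδ j hj))]
      gcongr
      exact hδ j hj
  have hunion : ∑ j ∈ T, μ (ball (c j) (δ j)) ≤ μ (ball z R) := by
    rw [← measure_biUnion_finset hdisj fun j _ => measurableSet_ball]
    exact measure_mono (iUnion₂_subset hsub)
  have hvol : (T.card : ℝ≥0∞) * ENNReal.ofReal (s ^ d) ≤ ENNReal.ofReal (R ^ d) := by
    have h := hsum.trans hunion
    rw [μ.addHaar_ball_of_pos _ hR, nsmul_eq_mul, ← mul_assoc] at h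
    exact (ENNReal.mul_le_mul_iff_left (measure_ball_pos μ 0 one_pos).ne'
      measure_ball_lt_top.ne).mp h
  rw [← ENNReal.ofReal_natCast, ← ENNReal.ofReal_mul (by positivity),
    ENNReal.ofReal_le_ofReal_iff (by positivity)] at hvol
  rw [div_pow, le_div_iff₀ (by positivity)]
  exact hvol

open Function in
theorem card_le_of_forall_mem_ball {ι : Type*} {ρ : ℂ → ℝ} {a : ι → ℂ} {r m : ℝ}
    (hr : 0 < r) (hmr : m * r < 1) (hρ : ∀ z, 0 < ρ z) (hlip : LipschitzWith 1 ρ)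
    (hdisj : Pairwise (Disjoint on fun j => ball (a j) (r / 5 * ρ (a j))))
    {z : ℂ} {T : Finset ι} (hT : ∀ j ∈ T, z ∈ ball (a j) (m * r * ρ (a j))) :
    (T.card : ℝ) ≤ ((1 + 5 * m) * (1 + m * r) / (1 - m * r)) ^ 2 := by
  rcases T.eq_empty_or_nonempty with rfl | ⟨j₀, hj₀⟩
  · simp only [Finset.card_empty, Nat.cast_zero]
    positivity
  have hm : 0 < m := by
    have := dist_nonneg.trans_lt (mem_ball.mp (hT j₀ hj₀))
    exact pos_of_mul_pos_left (pos_of_mul_pos_left this (hρ _).le) hr.le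
  have hz := hρ z
  have h1mr : 0 < 1 - m * r := by linarith
  have h1pmr : 0 < 1 + m * r := by positivity
  set s := r * ρ z / (5 * (1 + m * r))
  set R := (1 + 5 * m) * r * ρ z / (5 * (1 - m * r))
  have hdist : ∀ j ∈ T, dist z (a j) ≤ m * r * ρ (a j) := fun j hj => (hT j hj).le
  have hs : ∀ j ∈ T, s ≤ r / 5 * ρ (a j) := fun j hj => by
    have := hlip.le_one_add_mul_of_dist_le (hdist j hj)
    rw [div_le_iff₀ (by positivity)]
    nlinarith
  have hsub : ∀ j ∈ T, ball (a j) (r / 5 * ρ (a j)) ⊆ ball z R := fun j hj => by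
    have := hlip.one_sub_mul_le_of_dist_le (hdist j hj)
    refine ball_subset_ball' ?_
    rw [dist_comm, le_div_iff₀ (by positivity)]
    nlinarith [mul_le_mul_of_nonneg_right (hdist j hj) h1mr.le,
      mul_le_mul_of_nonneg_left this (by positivity : 0 ≤ (1 + 5 * m) * r)]
  have := card_le_div_pow_of_pairwiseDisjoint_ball (by positivity) (by positivity) hs
    (hdisj.set_pairwise _) hsub
  rwa [Complex.finrank_real_complex, show R / s = (1 + 5 * m) * (1 + m * r) / (1 - m * r) by
    simp only [R, s]; field_simp] at this

theorem stmt5_general (r m : ℝ) (hr : 0 < r) :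
    ∃ N : ℕ, ∀ (ρ : ℂ → ℝ) (a : ℕ → ℂ),
      (∀ z, 0 < ρ z) → LipschitzWith 1 ρ →
      (∀ j k : ℕ, j ≠ k →
        Disjoint (ball (a j) (r / 5 * ρ (a j))) (ball (a k) (r / 5 * ρ (a k)))) →
      (m * r < 1 →
        ∀ z : ℂ, ({j | z ∈ ball (a j) (m * r * ρ (a j))} : Set ℕ).Finite ∧
          ({j | z ∈ ball (a j) (m * r * ρ (a j))} : Set ℕ).ncard ≤ N) ∧
      ((⋃ j, ball (a j) (r * ρ (a j))) = Set.univ → 1 ≤ m →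
        ∀ z : ℂ, ∃ j : ℕ, z ∈ ball (a j) (m * r * ρ (a j))) := by
  refine ⟨⌈((1 + 5 * m) * (1 + m * r) / (1 - m * r)) ^ 2⌉₊,
    fun ρ a hρ hlip hdisj => ⟨fun hmr z => ?_, fun hcov hm1 z => ?_⟩⟩
  · refine Set.finite_and_ncard_le_of_forall_finset fun T hT => ?_
    have := card_le_of_forall_mem_ball hr hmr hρ hlip hdisj fun j hj => hT hj
    exact_mod_cast this.trans (Nat.le_ceil _)
  · obtain ⟨j, hj⟩ := mem_iUnion.mp (hcov ▸ mem_univ z)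
    refine ⟨j, ball_subset_ball ?_ hj⟩
    rw [mul_assoc]
    exact le_mul_of_one_le_left (mul_pos hr (hρ _)).le hm1

/-- finite multiplicity of `r`-lattices, and covering. -/
theorem stmt5 (r m : ℝ) (hr : 0 < r) (hm : 0 < m) :
    ∃ N : ℕ, ∀ (ρ : ℂ → ℝ) (a : ℕ → ℂ),
      (∀ z, 0 < ρ z) → LipschitzWith 1 ρ →
      (∀ j k : ℕ, j ≠ k →
        Disjoint (ball (a j) (r / 5 * ρ (a j))) (ball (a k) (r / 5 * ρ (a k)))) →
      (m * r < 1 →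
        ∀ z : ℂ, ({j | z ∈ ball (a j) (m * r * ρ (a j))} : Set ℕ).Finite ∧
          ({j | z ∈ ball (a j) (m * r * ρ (a j))} : Set ℕ).ncard ≤ N) ∧
      ((⋃ j, ball (a j) (r * ρ (a j))) = Set.univ → 1 ≤ m →
        ∀ z : ℂ, ∃ j : ℕ, z ∈ ball (a j) (m * r * ρ (a j))) :=
  stmt5_general r m hr
end
end

section
/- Let μ be a Borel measure on ℂ and let ρ : ℂ → ℝ be a function such that for every z ∈ ℂ, ρ(z) is the unique positive radius r with μ(D(z,r)) = 1 (i.e. ρ(z) > 0, μ(D(z,ρ(z))) = 1, and for any r > 0 with μ(D(z,r)) = 1 one has r = ρ(z)). Then ρ is 1-Lipschitz: |ρ(z) − ρ(w)| ≤ |z − w| for all z, w ∈ ℂ. -/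
open MeasureTheory Metric Complex ENNReal Set

noncomputable section

/-- the radius function `ρ` is 1-Lipschitz. -/
theorem stmt6 (μ : Measure ℂ) (ρ : ℂ → ℝ)
    (hρ : ∀ z : ℂ, 0 < ρ z ∧ μ (ball z (ρ z)) = 1 ∧
      ∀ s : ℝ, 0 < s → μ (ball z s) = 1 → s = ρ z) :
    ∀ z w : ℂ, |ρ z - ρ w| ≤ dist z w := by
  have key : ∀ z w : ℂ, ρ z ≤ ρ w + dist z w := by
    intro z w
    by_contra h
    push_neg at h
    set r : ℝ := ρ w + dist z w with hrdef
    have hr : 0 < r := add_pos_of_pos_of_nonneg (hρ w).1 dist_nonneg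
    have hsub : ball w (ρ w) ⊆ ball z r := by
      intro x hx
      simp only [mem_ball] at hx ⊢
      calc dist x z ≤ dist x w + dist w z := dist_triangle x w z
        _ < ρ w + dist z w := by
            have := dist_comm w z
            linarith [hx, dist_comm w z ▸ le_refl (dist w z)]
    have h1 : (1 : ℝ≥0∞) ≤ μ (ball z r) := (hρ w).2.1 ▸ measure_mono hsub
    have h2 : μ (ball z r) ≤ 1 := by
      have : ball z r ⊆ ball z (ρ z) := ball_subset_ball h.le
      exact (hρ z).2.1 ▸ measure_mono this
    have heq : μ (ball z r) = 1 := le_antisymm h2 h1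
    have := (hρ z).2.2 r hr heq
    linarith
  intro z w
  rw [abs_sub_le_iff]
  constructor
  · linarith [key z w]
  · linarith [key w z, dist_comm z w ▸ le_refl (dist z w), dist_comm w z]
end
end

section
/- Let z₀ ∈ ℂ, R > 0, and let F be a holomorphic function on the disk D(z₀,R). Then ∫_{D(z₀,R)} (Re F(w) − Re F(z₀))² dA(w) ≤ ∫_{D(z₀,R)} (Im F(w))² dA(w), where both sides may be +∞. -/
/-!
With `G = F - Re F(z₀)` one has `Re (G²) = (Re G)² - (Im G)²`, and by the area mean value
property `∫_{D(z₀,r)} G² dA = π r² G(z₀)²`, whose real part `-π r² (Im F(z₀))²` is `≤ 0`.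
This gives the inequality on every disk `D(z₀,r)` with `r < R`, where `F` is continuous up to the
boundary so that all integrals are finite, and monotone convergence lets `r` increase to `R`.
-/

open MeasureTheory Metric Complex ENNReal Set
open scoped Real

theorem ContinuousOn.integrableOn_ball {X E : Type*} [MetricSpace X] [ProperSpace X]
    [MeasurableSpace X] [OpensMeasurableSpace X] {μ : Measure X} [IsFiniteMeasureOnCompacts μ]
    [NormedAddCommGroup E] {f : X → E} {x : X} {r : ℝ} (hf : ContinuousOn f (closedBall x r)) :
    IntegrableOn f (ball x r) μ :=
  (hf.integrableOn_compact (isCompact_closedBall x r)).mono_set ball_subset_closedBall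

theorem setLIntegral_ball_le_of_forall_lt {α : Type*} [PseudoMetricSpace α] [MeasurableSpace α]
    {μ : Measure α} {f : α → ℝ≥0∞} {x : α} {R : ℝ} {C : ℝ≥0∞}
    (h : ∀ r < R, ∫⁻ w in ball x r, f w ∂μ ≤ C) : ∫⁻ w in ball x R, f w ∂μ ≤ C := by
  obtain ⟨u, hu_mono, hu_lt, hu_lim⟩ := exists_seq_strictMono_tendsto R
  have hball : ball x R = ⋃ n, ball x (u n) := by
    refine Subset.antisymm (fun w hw => ?_) (iUnion_subset fun n => ball_subset_ball (hu_lt n).le)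
    obtain ⟨n, hn⟩ := (hu_lim.eventually (lt_mem_nhds (mem_ball.1 hw))).exists
    exact mem_iUnion.2 ⟨n, mem_ball.2 hn⟩
  have hdir : Monotone fun n => ball x (u n) := fun _ _ hmn =>
    ball_subset_ball (hu_mono.monotone hmn)
  rw [hball, setLIntegral_iUnion_of_directed _ hdir.directed_le]
  exact iSup_le fun n => h _ (hu_lt n)

theorem setIntegral_ball_eq_intervalIntegral_circleAverage {E : Type*} [NormedAddCommGroup E]
    [NormedSpace ℝ E] {f : ℂ → E} {c : ℂ} {r : ℝ} (hr : 0 ≤ r)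
    (hf : ContinuousOn f (closedBall c r)) :
    ∫ w in ball c r, f w = ∫ ρ in 0..r, (2 * π * ρ) • Real.circleAverage f c ρ := by
  set g : ℝ × ℝ → E := fun p => p.1 • f (circleMap c p.1 p.2)
  set S : Set (ℝ × ℝ) := Ioo 0 r ×ˢ Ioo (-π) π
  have hS_target : S ⊆ polarCoord.target := prod_mono Ioo_subset_Ioi_self subset_rfl
  have hpolar : ∫ w in ball c r, f w = ∫ p in S, g p := by
    rw [← integral_indicator measurableSet_ball,
      ← integral_add_left_eq_self (μ := volume) _ c, ← Complex.integral_comp_polarCoord_symm,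
      ← inter_eq_self_of_subset_right hS_target,
      ← setIntegral_indicator (measurableSet_Ioo.prod measurableSet_Ioo)]
    refine setIntegral_congr_fun polarCoord.open_target.measurableSet fun p hp => ?_
    have hcirc : c + Complex.polarCoord.symm p = circleMap c p.1 p.2 := by
      simp [circleMap, Complex.exp_mul_I]
    have hmem : circleMap c p.1 p.2 ∈ ball c r ↔ p ∈ S := by
      have hp1 : 0 < p.1 := hp.1
      simp [S, mem_ball, dist_eq, circleMap_sub_center, abs_of_pos hp1, hp1, hp.2]
    rw [hcirc]
    by_cases hpS : p ∈ S
    · rw [indicator_of_mem (hmem.2 hpS), indicator_of_mem hpS]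
    · rw [indicator_of_notMem (mt hmem.1 hpS), indicator_of_notMem hpS, smul_zero]
  have hg : IntegrableOn g S := by
    refine (ContinuousOn.integrableOn_compact (isCompact_Icc.prod isCompact_Icc) ?_).mono_set
      (prod_mono Ioo_subset_Icc_self Ioo_subset_Icc_self)
    refine continuousOn_fst.smul (hf.comp (by fun_prop) fun p hp => ?_)
    simp [mem_closedBall, dist_eq, circleMap_sub_center, abs_of_nonneg hp.1.1, hp.1.2]
  have hangle : ∀ ρ, ∫ θ in Ioo (-π) π, g (ρ, θ) = (2 * π * ρ) • Real.circleAverage f c ρ := by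
    intro ρ
    have hper : ∫ θ in (-π)..π, f (circleMap c ρ θ) = ∫ θ in 0..2 * π, f (circleMap c ρ θ) := by
      simpa [show -π + 2 * π = π by ring] using
        ((periodic_circleMap c ρ).comp f).intervalIntegral_add_eq (-π) 0
    rw [integral_smul, ← integral_Ioc_eq_integral_Ioo,
      ← intervalIntegral.integral_of_le (by linarith [Real.pi_pos]), hper, Real.circleAverage_def,
      smul_smul, mul_right_comm, mul_inv_cancel₀ (by positivity), one_mul]
  rw [hpolar, Measure.volume_eq_prod, setIntegral_prod _ (by rwa [← Measure.volume_eq_prod]),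
    intervalIntegral.integral_of_le hr, integral_Ioc_eq_integral_Ioo]
  simp_rw [hangle]

theorem DiffContOnCl.setIntegral_ball_eq_smul {E : Type*} [NormedAddCommGroup E]
    [NormedSpace ℂ E] [CompleteSpace E] {f : ℂ → E} {c : ℂ} {r : ℝ}
    (hf : DiffContOnCl ℂ f (ball c r)) (hr : 0 ≤ r) : ∫ w in ball c r, f w = (π * r ^ 2) • f c := by
  have hmean : ∀ ρ ∈ uIcc 0 r, (2 * π * ρ) • Real.circleAverage f c ρ = (2 * π * ρ) • f c := by
    intro ρ hρ
    rw [uIcc_of_le hr] at hρ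
    rw [(hf.mono (ball_subset_ball (by rw [abs_of_nonneg hρ.1]; exact hρ.2))).circleAverage]
  rw [setIntegral_ball_eq_intervalIntegral_circleAverage hr hf.continuousOn_ball,
    intervalIntegral.integral_congr hmean, intervalIntegral.integral_smul_const,
    intervalIntegral.integral_const_mul, integral_id]
  congr 1
  ring

theorem DiffContOnCl.setIntegral_re_sq_sub_im_sq {F : ℂ → ℂ} {c : ℂ} {r : ℝ}
    (hF : DiffContOnCl ℂ F (ball c r)) (hr : 0 ≤ r) :
    ∫ w in ball c r, ((F w).re ^ 2 - (F w).im ^ 2)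
      = π * r ^ 2 * ((F c).re ^ 2 - (F c).im ^ 2) := by
  have hF_sq : DiffContOnCl ℂ (fun w => F w ^ 2) (ball c r) := ⟨hF.1.pow 2, hF.2.pow 2⟩
  have hre : ∀ z : ℂ, z.re ^ 2 - z.im ^ 2 = (z ^ 2).re := fun z => by simp [sq]
  simp_rw [hre, ← reCLM_apply, reCLM.integral_comp_comm hF_sq.continuousOn_ball.integrableOn_ball,
    hF_sq.setIntegral_ball_eq_smul hr]
  simp only [reCLM_apply, smul_re, smul_eq_mul]

theorem DiffContOnCl.setIntegral_re_sub_sq_le {F : ℂ → ℂ} {c : ℂ} {r : ℝ}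
    (hF : DiffContOnCl ℂ F (ball c r)) :
    ∫ w in ball c r, ((F w).re - (F c).re) ^ 2 ≤ ∫ w in ball c r, (F w).im ^ 2 := by
  rcases lt_or_ge r 0 with hr | hr
  · simp [ball_eq_empty.2 hr.le]
  have hF_cont := hF.continuousOn_ball
  have hsub := integral_sub (μ := volume.restrict (ball c r))
    (f := fun w => ((F w).re - (F c).re) ^ 2) (g := fun w => (F w).im ^ 2)
    (ContinuousOn.integrableOn_ball (by fun_prop)) (ContinuousOn.integrableOn_ball (by fun_prop))
  -- `F - Re F(c)` is purely imaginary at `c`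
  have hmean := (hF.sub_const ((F c).re : ℂ)).setIntegral_re_sq_sub_im_sq hr
  simp only [sub_re, ofReal_re, sub_im, ofReal_im, sub_zero, sub_self, ne_eq,
    OfNat.ofNat_ne_zero, not_false_eq_true, zero_pow, zero_sub, hsub] at hmean
  nlinarith [show 0 ≤ π * r ^ 2 * (F c).im ^ 2 by positivity]

theorem DiffContOnCl.setLIntegral_re_sub_sq_le {F : ℂ → ℂ} {c : ℂ} {r : ℝ}
    (hF : DiffContOnCl ℂ F (ball c r)) :
    ∫⁻ w in ball c r, ENNReal.ofReal (((F w).re - (F c).re) ^ 2)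
      ≤ ∫⁻ w in ball c r, ENNReal.ofReal ((F w).im ^ 2) := by
  have hF_cont := hF.continuousOn_ball
  have hre : IntegrableOn (fun w => ((F w).re - (F c).re) ^ 2) (ball c r) :=
    ContinuousOn.integrableOn_ball (by fun_prop)
  have him : IntegrableOn (fun w => (F w).im ^ 2) (ball c r) :=
    ContinuousOn.integrableOn_ball (by fun_prop)
  rw [← ofReal_integral_eq_lintegral_ofReal hre (ae_of_all _ fun _ => sq_nonneg _),
    ← ofReal_integral_eq_lintegral_ofReal him (ae_of_all _ fun _ => sq_nonneg _)]
  exact ENNReal.ofReal_le_ofReal hF.setIntegral_re_sub_sq_le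

theorem stmt17_general (z₀ : ℂ) (R : ℝ) (F : ℂ → ℂ)
    (hF : DifferentiableOn ℂ F (ball z₀ R)) :
    (∫⁻ w in ball z₀ R, ENNReal.ofReal (((F w).re - (F z₀).re) ^ 2))
      ≤ ∫⁻ w in ball z₀ R, ENNReal.ofReal ((F w).im ^ 2) :=
  setLIntegral_ball_le_of_forall_lt fun _ hr =>
    (hF.diffContOnCl_ball (closedBall_subset_ball hr)).setLIntegral_re_sub_sq_le.trans
      (lintegral_mono_set (ball_subset_ball hr.le))

/-- harmonic conjugate `L²` estimate on a disk. -/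
theorem stmt17 (z₀ : ℂ) (R : ℝ) (hR : 0 < R) (F : ℂ → ℂ)
    (hF : DifferentiableOn ℂ F (ball z₀ R)) :
    (∫⁻ w in ball z₀ R, ENNReal.ofReal (((F w).re - (F z₀).re) ^ 2))
      ≤ ∫⁻ w in ball z₀ R, ENNReal.ofReal ((F w).im ^ 2) :=
  stmt17_general z₀ R F hF
end
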